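/- The get functor of every epimorphism in the category Lens is an effective epimorphism in Cat: if E : B → C is an epic lens, then U E is the coequaliser in Cat of its kernel pair (the two projections of the pullback of U E along itself). -/

import Mathlib

universe u

open CategoryTheory CategoryTheory.Limits

namespace LensPaper

section OutDefs

variable {A : Type*} [Category A] {B : Type*} [Category B] {C : Type*} [Category C]

/-- The "out-set" of an object: the collection of all morphisms out of `X`,
bundled with their targets. -/
def Out (X : A) : Type _ := Σ Y : A, X ⟶ Y

/-- The identity element of an out-set. -/
def Out.id (X : A) : Out X := ⟨X, 𝟙 X⟩

/-- Composition of a morphism out of `X` with a morphism out of its target. -/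
def Out.comp {X : A} (u : Out X) (v : Out u.1) : Out X := ⟨v.1, u.2 ≫ v.2⟩

/-- Transport of out-sets along an equality of objects. -/
def Out.cast {X Y : A} (h : X = Y) (u : Out X) : Out Y := ⟨u.1, eqToHom h.symm ≫ u.2⟩

@[simp] theorem Out.cast_rfl {X : A} (u : Out X) : Out.cast rfl u = u := by
  cases u; simp [Out.cast]; rfl

theorem Out.cast_cast {X Y Z : A} (h₁ : X = Y) (h₂ : Y = Z) (u : Out X) :
    Out.cast h₂ (Out.cast h₁ u) = Out.cast (h₁.trans h₂) u := by
  subst h₁; subst h₂; simp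

/-- The action of a functor on out-sets. -/
def mapOut (F : A ⥤ B) {X : A} (u : Out X) : Out (F.obj X) := ⟨F.obj u.1, F.map u.2⟩

theorem mapOut_cast (F : A ⥤ B) {X Y : A} (h : X = Y) (u : Out X) :
    mapOut F (Out.cast h u) = Out.cast (congrArg F.obj h) (mapOut F u) := by
  subst h; simp

/-- The set of all morphisms of a category, bundled with their endpoints. -/
def Mor (A : Type*) [Category A] : Type _ := Σ (X Y : A), X ⟶ Y

/-- The action of a functor on morphisms, as a function on bundled morphisms. -/
def mapMor (F : A ⥤ B) : Mor A → Mor B := fun m => ⟨F.obj m.1, F.obj m.2.1, F.map m.2.2⟩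

/-- The set of composable pairs of morphisms of a category. -/
def CompPair (A : Type*) [Category A] : Type _ := Σ (X Y Z : A), (X ⟶ Y) × (Y ⟶ Z)

/-- The action of a functor on composable pairs. -/
def mapCompPair (F : A ⥤ B) : CompPair A → CompPair B :=
  fun p => ⟨F.obj p.1, F.obj p.2.1, F.obj p.2.2.1, (F.map p.2.2.2.1, F.map p.2.2.2.2)⟩

/-- A functor is a discrete opfibration if every morphism out of `F.obj X`
has a unique lift to a morphism out of `X`. -/
def IsDiscreteOpfibration (F : A ⥤ B) : Prop :=
  ∀ (X : A) (u : Out (F.obj X)), ∃! v : Out X, mapOut F v = u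

/-- A cosieve is an injective-on-objects discrete opfibration. -/
def IsCosieve (F : A ⥤ B) : Prop :=
  IsDiscreteOpfibration F ∧ Function.Injective F.obj

end OutDefs

/-- An (asymmetric delta) lens: a get functor together with put functions
satisfying PutGet, PutId and PutPut. -/
structure DLens (A : Type*) (B : Type*) [Category A] [Category B] where
  get : A ⥤ B
  put : ∀ (X : A), Out (get.obj X) → Out X
  putGet : ∀ (X : A) (u : Out (get.obj X)), mapOut get (put X u) = u
  putId : ∀ (X : A), put X (Out.id (get.obj X)) = Out.id X
  putPut : ∀ (X : A) (u : Out (get.obj X)) (v : Out u.1) (h : u.1 = get.obj (put X u).1),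
      put X (u.comp v) = (put X u).comp (put (put X u).1 (Out.cast h v))

namespace DLens

variable {A : Type*} [Category A] {B : Type*} [Category B] {C : Type*} [Category C]

theorem put_cast (F : DLens A B) {X₁ X₂ : A} (e : X₁ = X₂) (u : Out (F.get.obj X₁)) :
    Out.cast e (F.put X₁ u) = F.put X₂ (Out.cast (congrArg F.get.obj e) u) := by
  subst e; simp

/-- The identity lens. -/
def id (A : Type*) [Category A] : DLens A A where
  get := Functor.id A
  put X u := u
  putGet X u := rfl
  putId X := rfl
  putPut X u v h := by
    have hv : Out.cast h v = v := Out.cast_rfl v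
    rw [hv]

/-- Composition of lenses. -/
def comp (F : DLens A B) (G : DLens B C) : DLens A C where
  get := F.get ⋙ G.get
  put X u := F.put X (G.put (F.get.obj X) u)
  putGet X u := by
    show mapOut G.get (mapOut F.get (F.put X (G.put (F.get.obj X) u))) = u
    rw [F.putGet, G.putGet]
  putId X := by
    show F.put X (G.put (F.get.obj X) (Out.id (G.get.obj (F.get.obj X)))) = Out.id X
    rw [G.putId, F.putId]
  putPut X u v h := by
    have h₁ : u.1 = G.get.obj (G.put (F.get.obj X) u).1 :=
      (congrArg Sigma.fst (G.putGet (F.get.obj X) u)).symm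
    show F.put X (G.put (F.get.obj X) (u.comp v)) = _
    rw [G.putPut (F.get.obj X) u v h₁]
    have h₂ : (G.put (F.get.obj X) u).1 =
        F.get.obj (F.put X (G.put (F.get.obj X) u)).1 :=
      (congrArg Sigma.fst (F.putGet X (G.put (F.get.obj X) u))).symm
    rw [F.putPut X (G.put (F.get.obj X) u) _ h₂]
    rw [put_cast G h₂, Out.cast_cast]

end DLens

/-- The category of small categories and (asymmetric delta) lenses. -/
def LensCat : Type (u + 1) := Cat.{u, u}

/-- Regard a small category as an object of the category of lenses. -/
def LensCat.of (C : Cat.{u, u}) : LensCat.{u} := C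

/-- The underlying small category of an object of the category of lenses. -/
def LensCat.toCat (A : LensCat.{u}) : Cat.{u, u} := A

instance : Category.{u} LensCat.{u} where
  Hom A B := DLens A.toCat B.toCat
  id A := DLens.id A.toCat
  comp F G := F.comp G
  id_comp F := rfl
  comp_id F := rfl
  assoc F G H := rfl

/-- The get functor of a lens, i.e. a morphism of `LensCat` regarded as a `DLens`. -/
def LensCat.get {A B : LensCat.{u}} (F : A ⟶ B) : A.toCat ⟶ B.toCat := (DLens.get F).toCatHom

/-- The identity-on-objects forgetful functor from the category of lenses to the
category of small categories and functors, sending a lens to its get functor. -/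
def lensForget : LensCat.{u} ⥤ Cat.{u, u} where
  obj A := A.toCat
  map F := (DLens.get F).toCatHom
  map_id A := rfl
  map_comp F G := rfl

end LensPaper
open CategoryTheory CategoryTheory.Limits LensPaper


/-! An epic lens `E : B → C` is surjective on objects. Otherwise some object of `C` lies outside
the cosieve generated by the image of `E`, and gluing two copies of `C` along that cosieve gives
two different coprojection lenses out of `C` that agree after `E`.

A lens that is surjective on objects is the coequaliser of its kernel pair. Choose an object `σ c`
over each `c`. A functor `G` that coequalises the kernel pair identifies any two lifts of the same
morphism of `C`, so it descends along `E` by sending `g : c ⟶ c'` to `G` of the put of `g` at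
`σ c`. Functoriality of the descended functor follows from PutPut and PutId. -/

universe v

namespace LensPaper

section Basics

variable {A : Type*} [Category A] {B : Type*} [Category B]

-- Stated for `Σ` rather than `Out`: `rw` fails on motives containing `Sigma.fst` of an `Out`.
theorem Out.snd_eq_of_eq {X : A} {p q : Σ Y : A, X ⟶ Y} (h : p = q) :
    p.2 = q.2 ≫ eqToHom (congrArg Sigma.fst h).symm := by
  subst h; simp

theorem mapOut_comp (F : A ⥤ B) {X : A} (u : Out X) (v : Out u.1) :
    mapOut F (u.comp v) = (mapOut F u).comp (mapOut F v) :=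
  congrArg (fun g => (⟨_, g⟩ : Out (F.obj X))) (F.map_comp u.2 v.2)

namespace DLens

theorem obj_put (F : DLens A B) (X : A) (u : Out (F.get.obj X)) :
    F.get.obj (F.put X u).1 = u.1 :=
  congrArg Sigma.fst (F.putGet X u)

theorem map_put (F : DLens A B) (X : A) (u : Out (F.get.obj X)) :
    F.get.map (F.put X u).2 = u.2 ≫ eqToHom (F.obj_put X u).symm :=
  Out.snd_eq_of_eq (F.putGet X u)

theorem ext {F G : DLens A B} (hget : F.get = G.get)
    (hput : ∀ X u, F.put X u = G.put X (Out.cast (Functor.congr_obj hget X) u)) : F = G := by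
  obtain ⟨F, φ, _, _, _⟩ := F
  obtain ⟨G, ψ, _, _, _⟩ := G
  dsimp only at hget hput
  subst hget
  obtain rfl : φ = ψ := funext fun X => funext fun u => by simpa using hput X u
  rfl

end DLens

end Basics

section

variable {B : Type*} [Category B] {C : Type*} [Category C] (F : B ⥤ C)

def Reachable (c : C) : Prop := ∃ b, Nonempty (F.obj b ⟶ c)

variable {F} in
theorem Reachable.of_hom {c c' : C} (h : Reachable F c) (g : c ⟶ c') : Reachable F c' :=
  let ⟨b, ⟨f⟩⟩ := h; ⟨b, ⟨f ≫ g⟩⟩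

/-- Two copies of `C` glued along the cosieve of objects reachable from the image of `F`:
the tag `true` marks the second copy, which only has the unreachable objects. -/
def Glue : Type _ := {p : C × Bool // p.2 = true → ¬ Reachable F p.1}

instance : Category (Glue F) where
  Hom x y := {f : x.1.1 ⟶ y.1.1 // x.1.2 = y.1.2 ∨ Reachable F y.1.1}
  id x := ⟨𝟙 _, Or.inl rfl⟩
  comp f g := ⟨f.1 ≫ g.1, by
    rcases f with ⟨f, hf | hf⟩ <;> rcases g with ⟨g, hg | hg⟩
    · exact Or.inl (hf.trans hg)
    · exact Or.inr hg
    · exact Or.inr (hf.of_hom g)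
    · exact Or.inr hg⟩

namespace Glue

def forget : Glue F ⥤ C where
  obj x := x.1.1
  map f := f.1

instance : (forget F).Faithful where
  map_injective h := Subtype.ext h

open Classical in
noncomputable def tag (i : Bool) (c : C) : Bool := if Reachable F c then false else i

variable {F}

theorem tag_of_reachable (i : Bool) {c : C} (h : Reachable F c) : tag F i c = false :=
  if_pos h

theorem tag_of_not_reachable (i : Bool) {c : C} (h : ¬ Reachable F c) : tag F i c = i :=
  if_neg h

variable (F)

noncomputable def incl (i : Bool) : C ⥤ Glue F where
  obj c := ⟨(c, tag F i c), fun hi hc => by simp [tag_of_reachable i hc] at hi⟩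
  map {c c'} f := ⟨f, by
    by_cases hc' : Reachable F c'
    · exact Or.inr hc'
    · have hc : ¬ Reachable F c := fun hc => hc' (hc.of_hom f)
      exact Or.inl ((tag_of_not_reachable i hc).trans (tag_of_not_reachable i hc').symm)⟩

variable {F}

theorem tag_eq_of_hom {i : Bool} {c : C} {y : Glue F} (f : (incl F i).obj c ⟶ y) :
    tag F i y.1.1 = y.1.2 := by
  obtain ⟨⟨y, j⟩, hy⟩ := y
  by_cases hr : Reachable F y
  · rw [tag_of_reachable i hr]
    cases j
    · rfl
    · exact absurd hr (hy rfl)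
  · rcases f with ⟨f, hf | hf⟩
    · have hc : ¬ Reachable F c := fun hc => hr (hc.of_hom f)
      exact (tag_of_not_reachable i hr).trans ((tag_of_not_reachable i hc).symm.trans hf)
    · exact absurd hf hr

variable (F)

noncomputable def inj (i : Bool) : DLens C (Glue F) where
  get := incl F i
  put _ u := mapOut (forget F) u
  putGet c u := by
    obtain ⟨⟨⟨y, j⟩, hy⟩, f⟩ := u
    obtain rfl : tag F i y = j := tag_eq_of_hom f
    rfl
  putId _ := rfl
  putPut c u v h := by
    rw [mapOut_comp, mapOut_cast]
    exact congrArg _ (Out.cast_rfl _).symm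

theorem comp_incl_eq : F ⋙ incl F false = F ⋙ incl F true := by
  have hobj (b : B) : (incl F false).obj (F.obj b) = (incl F true).obj (F.obj b) := by
    have hr : Reachable F (F.obj b) := ⟨b, ⟨𝟙 _⟩⟩
    exact Subtype.ext (Prod.ext rfl ((tag_of_reachable _ hr).trans (tag_of_reachable _ hr).symm))
  refine CategoryTheory.Functor.ext hobj fun b b' f => (forget F).map_injective ?_
  rw [Functor.map_comp, Functor.map_comp, eqToHom_map, eqToHom_map]
  exact ((Category.id_comp _).trans (Category.comp_id _)).symm

theorem comp_inj_eq (L : DLens B C) : L.comp (inj L.get false) = L.comp (inj L.get true) :=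
  DLens.ext (comp_incl_eq L.get) fun X u => congrArg (L.put X)
    ((mapOut_cast (forget L.get) (Functor.congr_obj (comp_incl_eq L.get) X) u).trans
      (Out.cast_rfl _)).symm

end Glue

end

theorem reachable_of_epi {B C : LensCat.{u}} (E : B ⟶ C) [Epi E] (c : C.toCat) :
    Reachable (DLens.get E) c := by
  by_contra hc
  let D : LensCat.{u} := Cat.of (Glue (DLens.get E))
  have h := Epi.left_cancellation (f := E) (Z := D) (Glue.inj _ false) (Glue.inj _ true)
    (Glue.comp_inj_eq E)
  have htag := congrArg (fun L : C ⟶ D => ((DLens.get L).obj c).1.2) h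
  simp only [Glue.inj, Glue.incl, Glue.tag_of_not_reachable _ hc] at htag
  exact Bool.false_ne_true htag

theorem DLens.get_obj_surjective_of_epi {B C : LensCat.{u}} (E : B ⟶ C) [Epi E] :
    Function.Surjective (DLens.get E).obj := fun c =>
  let ⟨b, ⟨f⟩⟩ := reachable_of_epi E c
  ⟨_, DLens.obj_put E b ⟨c, f⟩⟩

structure KernelPairCat {B : Type*} [Category B] {C : Type*} [Category C] (F : B ⥤ C) where
  fst : B
  snd : B
  w : F.obj fst = F.obj snd

namespace KernelPairCat

variable {B : Type*} [Category B] {C : Type*} [Category C] {F : B ⥤ C}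

instance : Category (KernelPairCat F) where
  Hom x y := {p : (x.fst ⟶ y.fst) × (x.snd ⟶ y.snd) //
    F.map p.1 ≫ eqToHom y.w = eqToHom x.w ≫ F.map p.2}
  id x := ⟨(𝟙 _, 𝟙 _), by simp⟩
  comp f g := ⟨(f.1.1 ≫ g.1.1, f.1.2 ≫ g.1.2), by
    rw [F.map_comp, F.map_comp, Category.assoc, g.2, ← Category.assoc, f.2, Category.assoc]⟩

theorem ext {x y : KernelPairCat F} (h₁ : x.fst = y.fst) (h₂ : x.snd = y.snd) : x = y := by
  cases x; cases y; cases h₁; cases h₂; rfl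

variable (F)

def π₁ : KernelPairCat F ⥤ B where
  obj := fst
  map f := f.1.1

def π₂ : KernelPairCat F ⥤ B where
  obj := snd
  map f := f.1.2

theorem condition : π₁ F ⋙ F = π₂ F ⋙ F :=
  CategoryTheory.Functor.ext w fun x y f => by
    rw [Functor.comp_map, Functor.comp_map, ← Category.assoc]
    exact (comp_eqToHom_iff _ _ _).1 f.2

def lift {D : Type*} [Category D] (G₁ G₂ : D ⥤ B) (h : G₁ ⋙ F = G₂ ⋙ F) :
    D ⥤ KernelPairCat F where
  obj d := ⟨G₁.obj d, G₂.obj d, Functor.congr_obj h d⟩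
  map f := ⟨(G₁.map f, G₂.map f), by
    rw [← Functor.comp_map, Functor.congr_hom h f]
    simp⟩

variable {F}

theorem functor_ext {D : Type*} [Category D] {G H : D ⥤ KernelPairCat F}
    (h₁ : G ⋙ π₁ F = H ⋙ π₁ F) (h₂ : G ⋙ π₂ F = H ⋙ π₂ F) : G = H := by
  have hobj (d : D) : G.obj d = H.obj d :=
    ext (Functor.congr_obj h₁ d) (Functor.congr_obj h₂ d)
  refine CategoryTheory.Functor.ext hobj fun d d' f => Subtype.ext (Prod.ext ?_ ?_)
  · change (π₁ F).map (G.map f) = (π₁ F).map (eqToHom _ ≫ H.map f ≫ eqToHom _)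
    rw [Functor.map_comp, Functor.map_comp, eqToHom_map, eqToHom_map]
    exact Functor.congr_hom h₁ f
  · change (π₂ F).map (G.map f) = (π₂ F).map (eqToHom _ ≫ H.map f ≫ eqToHom _)
    rw [Functor.map_comp, Functor.map_comp, eqToHom_map, eqToHom_map]
    exact Functor.congr_hom h₂ f

variable {D : Type*} [Category D] {G : B ⥤ D}

theorem obj_eq_of_comp_eq (hG : π₁ F ⋙ G = π₂ F ⋙ G) {b b' : B} (e : F.obj b = F.obj b') :
    G.obj b = G.obj b' :=
  Functor.congr_obj hG ⟨b, b', e⟩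

theorem map_eq_of_comp_eq (hG : π₁ F ⋙ G = π₂ F ⋙ G) {b₁ b₁' b₂ b₂' : B}
    (f₁ : b₁ ⟶ b₁') (f₂ : b₂ ⟶ b₂') (e : F.obj b₁ = F.obj b₂) (e' : F.obj b₁' = F.obj b₂')
    (h : F.map f₁ ≫ eqToHom e' = eqToHom e ≫ F.map f₂) :
    G.map f₁ = eqToHom (obj_eq_of_comp_eq hG e) ≫ G.map f₂ ≫
      eqToHom (obj_eq_of_comp_eq hG e').symm :=
  Functor.congr_hom hG (X := ⟨b₁, b₂, e⟩) (Y := ⟨b₁', b₂', e'⟩) ⟨(f₁, f₂), h⟩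

end KernelPairCat

theorem isPullback_kernelPairCat {X Y : Cat.{v, u}} (F : X ⟶ Y) :
    IsPullback (KernelPairCat.π₁ F.toFunctor).toCatHom (KernelPairCat.π₂ F.toFunctor).toCatHom
      F F :=
  IsPullback.of_isLimit (PullbackCone.IsLimit.mk
    (Cat.Hom.ext (KernelPairCat.condition F.toFunctor))
    (fun s : PullbackCone F F => (KernelPairCat.lift F.toFunctor s.fst.toFunctor
      s.snd.toFunctor (congrArg Cat.Hom.toFunctor s.condition)).toCatHom)
    (fun _ => rfl) (fun _ => rfl)
    (fun _ _ h₁ h₂ => Cat.Hom.ext <| KernelPairCat.functor_ext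
      (congrArg Cat.Hom.toFunctor h₁) (congrArg Cat.Hom.toFunctor h₂)))

namespace DLens

open KernelPairCat Function

variable {B : Type*} [Category B] {C : Type*} [Category C] (E : DLens B C)

-- Valued in `Σ` rather than `Out`, for the reason given at `Out.snd_eq_of_eq`.
def lift {b : B} {c c' : C} (e : E.get.obj b = c) (g : c ⟶ c') : Σ b' : B, b ⟶ b' :=
  E.put b ⟨c', eqToHom e ≫ g⟩

variable {E}

theorem obj_lift {b : B} {c c' : C} (e : E.get.obj b = c) (g : c ⟶ c') :
    E.get.obj (E.lift e g).1 = c' :=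
  E.obj_put _ _

theorem map_lift {b : B} {c c' : C} (e : E.get.obj b = c) (g : c ⟶ c') :
    E.get.map (E.lift e g).2 = eqToHom e ≫ g ≫ eqToHom (obj_lift e g).symm :=
  (E.map_put _ _).trans (Category.assoc _ _ _)

theorem eq_map_lift {b : B} {c c' : C} (e : E.get.obj b = c) (g : c ⟶ c') :
    g = eqToHom e.symm ≫ E.get.map (E.lift e g).2 ≫ eqToHom (obj_lift e g) := by
  simp [map_lift]

theorem lift_id {b : B} {c : C} (e : E.get.obj b = c) : E.lift e (𝟙 c) = ⟨b, 𝟙 b⟩ := by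
  subst e
  show E.put b ⟨_, eqToHom rfl ≫ 𝟙 _⟩ = _
  rw [eqToHom_refl, Category.comp_id]
  exact E.putId b

theorem lift_comp {b : B} {c c' c'' : C} (e : E.get.obj b = c) (g : c ⟶ c') (g' : c' ⟶ c'') :
    E.lift e (g ≫ g') = ⟨_, (E.lift e g).2 ≫ (E.lift (obj_lift e g) g').2⟩ := by
  refine (congrArg (E.put b) ?_).trans
    (E.putPut b ⟨c', eqToHom e ≫ g⟩ ⟨c'', g'⟩ (obj_lift e g).symm)
  exact congrArg (Sigma.mk c'') (Category.assoc _ _ _).symm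

variable {D : Type*} [Category D]

theorem eq_of_get_comp_eq (hE : Surjective E.get.obj) {m m' : C ⥤ D}
    (h : E.get ⋙ m = E.get ⋙ m') : m = m' := by
  have hobj (c : C) : m.obj c = m'.obj c :=
    (congrArg m.obj (surjInv_eq hE c)).symm.trans
      ((Functor.congr_obj h _).trans (congrArg m'.obj (surjInv_eq hE c)))
  refine CategoryTheory.Functor.ext hobj fun c c' g => ?_
  rw [eq_map_lift (surjInv_eq hE c) g]
  simp only [Functor.map_comp, eqToHom_map]
  rw [← Functor.comp_map, ← Functor.comp_map, Functor.congr_hom h]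
  simp

variable (hE : Surjective E.get.obj) {G : B ⥤ D} (hG : π₁ E.get ⋙ G = π₂ E.get ⋙ G)

theorem map_lift_eq {b₁ b₂ : B} {c c' : C} (e₁ : E.get.obj b₁ = c) (e₂ : E.get.obj b₂ = c)
    (g : c ⟶ c') :
    G.map (E.lift e₁ g).2 = eqToHom (obj_eq_of_comp_eq hG (e₁.trans e₂.symm)) ≫
      G.map (E.lift e₂ g).2 ≫
      eqToHom (obj_eq_of_comp_eq hG ((obj_lift e₁ g).trans (obj_lift e₂ g).symm)).symm :=
  map_eq_of_comp_eq hG _ _ (e₁.trans e₂.symm) ((obj_lift e₁ g).trans (obj_lift e₂ g).symm)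
    (by simp [map_lift])

variable (E)

noncomputable def descend : C ⥤ D where
  obj c := G.obj (surjInv hE c)
  map {c c'} g := G.map (E.lift (surjInv_eq hE c) g).2 ≫
    eqToHom (obj_eq_of_comp_eq hG ((obj_lift _ g).trans (surjInv_eq hE c').symm))
  map_id c := by
    rw [Out.snd_eq_of_eq (lift_id (surjInv_eq hE c)), Category.id_comp, eqToHom_map]
    simp
  map_comp {c c' c''} g g' := by
    rw [Out.snd_eq_of_eq (lift_comp (surjInv_eq hE c) g g'), G.map_comp, G.map_comp,
      eqToHom_map, map_lift_eq hG (obj_lift _ g) (surjInv_eq hE c') g']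
    simp

theorem comp_descend : E.get ⋙ descend E hE hG = G := by
  refine CategoryTheory.Functor.ext (fun b => obj_eq_of_comp_eq hG (surjInv_eq hE _))
    fun b b' f => ?_
  have e := surjInv_eq hE (E.get.obj b)
  rw [Functor.comp_map]
  dsimp only [descend]
  rw [map_eq_of_comp_eq hG _ f e (obj_lift e (E.get.map f)) (by simp [map_lift])]
  simp

end DLens

noncomputable def DLens.isColimitCofork {B C : Type u} [Category.{u} B] [Category.{u} C]
    (E : DLens B C) (hE : Function.Surjective E.get.obj)
    (w : (KernelPairCat.π₁ E.get).toCatHom ≫ E.get.toCatHom =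
      (KernelPairCat.π₂ E.get).toCatHom ≫ E.get.toCatHom) :
    IsColimit (Cofork.ofπ E.get.toCatHom w) :=
  Cofork.IsColimit.mk _
    (fun s => (E.descend hE (congrArg Cat.Hom.toFunctor s.condition)).toCatHom)
    (fun s => Cat.Hom.ext (E.comp_descend hE (congrArg Cat.Hom.toFunctor s.condition)))
    (fun s _ hm => Cat.Hom.ext (E.eq_of_get_comp_eq hE ((congrArg Cat.Hom.toFunctor hm).trans
      (E.comp_descend hE (congrArg Cat.Hom.toFunctor s.condition)).symm)))

end LensPaper

/-- The get functor of every epimorphism in `Lens` is an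
effective epimorphism in `Cat`: if `E` is an epic lens, then `U E` has a kernel
pair (the pullback of `U E` along itself) and `U E` is the coequaliser in `Cat`
of its kernel pair. -/
theorem epic_lens_get_effective_epi (B C : LensCat.{u}) (E : B ⟶ C) (hE : Epi E) :
    ∃ (K : Cat.{u, u}) (F1 F2 : K ⟶ B.toCat)
      (hpb : IsPullback F1 F2 (lensForget.map E) (lensForget.map E)),
      Nonempty (IsColimit (Cofork.ofπ (lensForget.map E) hpb.w)) :=
  ⟨_, _, _, isPullback_kernelPairCat (lensForget.map E),
    ⟨DLens.isColimitCofork E (DLens.get_obj_surjective_of_epi E) _⟩⟩
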